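/- arXiv:2201.01593 — 3 statements merged into one kernel-verified Lean document; each statement's English description precedes it below -/
import Mathlib

section
/- The Jacobian determinant of the Cayley-type map B(x,y) = (2x, 1 − |x|² − y²)/(|x|² + (1+y)²) at z = (x,y) equals −(2/((1+y)² + |x|²))^N. -/
/-!
Away from the south pole `s = (0, -1)`, `B` is the inversion `w ↦ s + 2 (w - s) / q w` in the
sphere of radius `√2` about `s`, where `q w = |x|² + (1 + y)² = |w - s|²`. The derivative of
`w ↦ (w - s) / q w` is `q⁻¹ (I - q⁻¹ ∇q ⊗ (w - s))`, and by the matrix determinant lemma the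
rank-one factor has determinant `1 - ∇q (w - s) / q`. Euler's identity for the quadratic form `q`
gives `∇q (w - s) = 2 q`, so this factor is `-1`, and the scalar `2 / q` contributes `(2 / q) ^ N`.
-/

/-- The Cayley type transformation `B(x,y) = (2x, 1 − |x|² − y²)/(|x|² + (1+y)²)`. -/
noncomputable def cayleyB {m : ℕ} (z : (Fin m → ℝ) × ℝ) : (Fin m → ℝ) × ℝ :=
  (fun i => 2 * z.1 i / ((∑ j, z.1 j ^ 2) + (1 + z.2) ^ 2),
    (1 - (∑ j, z.1 j ^ 2) - z.2 ^ 2) / ((∑ j, z.1 j ^ 2) + (1 + z.2) ^ 2))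

theorem LinearMap.det_id_add_smulRight {R M : Type*} [CommRing R] [AddCommGroup M] [Module R M]
    [Module.Free R M] [Module.Finite R M] (φ : M →ₗ[R] R) (u : M) :
    LinearMap.det (LinearMap.id + φ.smulRight u) = 1 + φ u := by
  classical
  let b := Module.Free.chooseBasis R M
  have hM : LinearMap.toMatrix b b (LinearMap.id + φ.smulRight u)
      = 1 + Matrix.replicateCol Unit (b.repr u) * Matrix.replicateRow Unit (φ ∘ b) := by
    ext i j
    simp [LinearMap.toMatrix_apply, Matrix.one_apply, Matrix.mul_apply, Finsupp.single_apply,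
      eq_comm, mul_comm]
  rw [← LinearMap.det_toMatrix b, hM, Matrix.det_one_add_replicateCol_mul_replicateRow]
  conv_rhs => rw [← b.sum_repr u, map_sum]
  simp only [dotProduct, Function.comp_apply, map_smul, smul_eq_mul, mul_comm]

section Inversion

variable {E : Type*} [NormedAddCommGroup E] [NormedSpace ℝ E] {q : E → ℝ} {z : E}

theorem hasFDerivAt_inv_smul_sub {ℓ : E →L[ℝ] ℝ} (hq : HasFDerivAt q ℓ z) (hz : q z ≠ 0)
    (a : E) :
    HasFDerivAt (fun w => (q w)⁻¹ • (w - a))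
      ((q z)⁻¹ • (ContinuousLinearMap.id ℝ E + (-(q z)⁻¹ • ℓ).smulRight (z - a))) z := by
  refine (((hasFDerivAt_inv hz).comp z hq).smul ((hasFDerivAt_id z).sub_const a)).congr_fderiv ?_
  ext1 v
  simp only [add_apply, smul_apply, ContinuousLinearMap.id_apply,
    ContinuousLinearMap.smulRight_apply, ContinuousLinearMap.comp_apply,
    ContinuousLinearMap.toSpanSingleton_apply, Function.comp_apply, id_eq, smul_eq_mul]
  module

theorem det_fderiv_inv_smul_sub [FiniteDimensional ℝ E] (hq : DifferentiableAt ℝ q z)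
    (hz : q z ≠ 0) (a : E) :
    LinearMap.det (fderiv ℝ (fun w => (q w)⁻¹ • (w - a)) z : E →ₗ[ℝ] E)
      = (q z)⁻¹ ^ Module.finrank ℝ E * (1 - fderiv ℝ q z (z - a) / q z) := by
  rw [(hasFDerivAt_inv_smul_sub hq.hasFDerivAt hz a).fderiv, ContinuousLinearMap.toLinearMap_smul,
    LinearMap.det_smul, ContinuousLinearMap.toLinearMap_add, ContinuousLinearMap.coe_id]
  calc _ = (q z)⁻¹ ^ Module.finrank ℝ E * (1 + (-(q z)⁻¹ • fderiv ℝ q z) (z - a)) :=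
        congrArg _ (LinearMap.det_id_add_smulRight _ _)
    _ = _ := by simp [div_eq_inv_mul, sub_eq_add_neg]

end Inversion

section Cayley

variable {m : ℕ}

noncomputable def cayleyDenom (w : (Fin m → ℝ) × ℝ) : ℝ := ∑ j, w.1 j ^ 2 + (1 + w.2) ^ 2

def southPole : (Fin m → ℝ) × ℝ := (0, -1)

theorem differentiable_cayleyDenom : Differentiable ℝ (cayleyDenom (m := m)) := by
  unfold cayleyDenom; fun_prop

theorem cayleyDenom_southPole_add_smul (t : ℝ) (z : (Fin m → ℝ) × ℝ) :
    cayleyDenom (southPole + t • (z - southPole)) = t ^ 2 * cayleyDenom z := by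
  simp only [cayleyDenom, southPole, Prod.fst_add, Prod.smul_fst, Prod.fst_sub, sub_zero,
    Pi.add_apply, Pi.zero_apply, Pi.smul_apply, smul_eq_mul, zero_add, mul_pow, ← Finset.mul_sum,
    Prod.snd_add, Prod.smul_snd, Prod.snd_sub, sub_neg_eq_add, add_neg_cancel_left]
  ring

theorem fderiv_cayleyDenom_apply_sub_southPole (z : (Fin m → ℝ) × ℝ) :
    fderiv ℝ cayleyDenom z (z - southPole) = 2 * cayleyDenom z := by
  have hline : HasDerivAt (fun t : ℝ => southPole + t • (z - southPole)) (z - southPole) 1 := by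
    simpa using ((hasDerivAt_id (1 : ℝ)).smul_const (z - southPole)).const_add southPole
  have h1 := (differentiable_cayleyDenom z).hasFDerivAt.comp_hasDerivAt_of_eq 1 hline (by simp)
  have h2 : HasDerivAt (fun t : ℝ => t ^ 2 * cayleyDenom z) (2 * cayleyDenom z) 1 := by
    simpa using (hasDerivAt_pow 2 (1 : ℝ)).mul_const (cayleyDenom z)
  have hcomp : (cayleyDenom ∘ fun t : ℝ => southPole + t • (z - southPole))
      = fun t => t ^ 2 * cayleyDenom z := funext fun t => cayleyDenom_southPole_add_smul t z
  rw [hcomp] at h1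
  exact h1.unique h2

-- Only eventually: at `southPole` itself the junk value `0 / 0 = 0` gives `cayleyB = 0`.
theorem cayleyB_eventuallyEq_inversion {z : (Fin m → ℝ) × ℝ} (hz : cayleyDenom z ≠ 0) :
    cayleyB =ᶠ[nhds z] fun w => (2 : ℝ) • ((cayleyDenom w)⁻¹ • (w - southPole)) + southPole := by
  filter_upwards [(differentiable_cayleyDenom z).continuousAt.eventually_ne hz] with w hw
  simp only [cayleyDenom] at hw ⊢
  ext i
  · simp only [cayleyB, southPole, Prod.fst_add, Prod.smul_fst, Prod.fst_sub, sub_zero,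
      Pi.add_apply, Pi.smul_apply, smul_eq_mul, Pi.zero_apply, add_zero]
    field_simp
  · simp only [cayleyB, southPole, Prod.snd_add, Prod.smul_snd, Prod.snd_sub, sub_neg_eq_add,
      smul_eq_mul]
    field_simp
    ring

end Cayley

theorem stmt7_general {m : ℕ} (z : (Fin m → ℝ) × ℝ)
    (hq : (∑ j, z.1 j ^ 2) + (1 + z.2) ^ 2 ≠ 0) :
    DifferentiableAt ℝ cayleyB z ∧
    LinearMap.det ((fderiv ℝ cayleyB z) : ((Fin m → ℝ) × ℝ) →ₗ[ℝ] ((Fin m → ℝ) × ℝ))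
      = -(2 / ((1 + z.2) ^ 2 + ∑ j, z.1 j ^ 2)) ^ (m + 1) := by
  have hz : cayleyDenom z ≠ 0 := hq
  have hinv : DifferentiableAt ℝ (fun w => (cayleyDenom w)⁻¹ • (w - southPole)) z :=
    ((differentiable_cayleyDenom z).inv hz).smul (differentiableAt_id.sub_const _)
  have hB := cayleyB_eventuallyEq_inversion hz
  refine ⟨((hinv.const_smul (2 : ℝ)).add_const _).congr_of_eventuallyEq hB, ?_⟩
  rw [hB.fderiv_eq, fderiv_add_const, fderiv_fun_const_smul hinv,
    ContinuousLinearMap.toLinearMap_smul, LinearMap.det_smul,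
    det_fderiv_inv_smul_sub (differentiable_cayleyDenom z) hz,
    fderiv_cayleyDenom_apply_sub_southPole]
  simp only [Module.finrank_prod, Module.finrank_fin_fun, Module.finrank_self]
  field_simp
  simp only [cayleyDenom]
  ring

/-- The Jacobian determinant of the Cayley type map at `z = (x, y)` (with
`|x|² + (1+y)² ≠ 0`) equals `−(2/((1+y)² + |x|²))^N`, where `N = m + 1`. -/
theorem stmt7 {m : ℕ} (hm : 1 ≤ m) (z : (Fin m → ℝ) × ℝ)
    (hq : (∑ j, z.1 j ^ 2) + (1 + z.2) ^ 2 ≠ 0) :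
    DifferentiableAt ℝ cayleyB z ∧
    LinearMap.det ((fderiv ℝ cayleyB z) : ((Fin m → ℝ) × ℝ) →ₗ[ℝ] ((Fin m → ℝ) × ℝ))
      = -(2 / ((1 + z.2) ^ 2 + ∑ j, z.1 j ^ 2)) ^ (m + 1) :=
  stmt7_general z hq
end

section
/- Let 2 ≤ p < N and let X(x,y) = (|x|² + (1−y)²)/(|x|² + (1+y)²) ∈ [0,1) for (x,y) in the half-space ℝ^N_+ with (x,y) ≠ (0,1). Define V_p(x,y) = [1 + X^{(N−1)/(p−1)} − 2 X^{(N−p)/(2(p−1))} (|x|² + (1+y)²)^{−1}(|x|² + y² − 1)] / [1 − X^{(N−p)/(2(p−1))}]². Then V_p(x,y) ≥ 1. -/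
/-!
Write `A = |x|² + (1-y)²`, `B = |x|² + (1+y)²`, `X = A/B ∈ [0,1)` and `u = X^a` with
`a = (N-p)/(2(p-1)) > 0`, so that `X^{(N-1)/(p-1)} = u² X`. Since `A + B = 2(|x|² + y² + 1)`, the
numerator of `V_p` equals `(1-u)(1-uX) + 4u/B`, and `(1-u)(1-uX) - (1-u)² = u(1-u)(1-X) ≥ 0`.
-/

open Real

lemma rpow_two_mul_add_one {X a : ℝ} (hX : 0 ≤ X) (ha : 0 < a) :
    X ^ (2 * a + 1) = (X ^ a) ^ 2 * X := by
  rw [rpow_add' hX (by positivity), rpow_one, mul_comm 2 a, rpow_mul hX, rpow_two]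

lemma sq_one_sub_le_mul_one_sub_mul_add {u X c : ℝ} (hu0 : 0 ≤ u) (hu1 : u ≤ 1) (hX : X ≤ 1)
    (hc : 0 ≤ c) : (1 - u) ^ 2 ≤ (1 - u) * (1 - u * X) + c := by
  nlinarith [mul_nonneg (mul_nonneg hu0 (sub_nonneg.2 hu1)) (sub_nonneg.2 hX)]

lemma one_add_sq_mul_sub_eq {s y u : ℝ} (hB : s + (1 + y) ^ 2 ≠ 0) :
    1 + u ^ 2 * ((s + (1 - y) ^ 2) / (s + (1 + y) ^ 2))
        - 2 * u * (s + (1 + y) ^ 2)⁻¹ * (s + y ^ 2 - 1)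
      = (1 - u) * (1 - u * ((s + (1 - y) ^ 2) / (s + (1 + y) ^ 2))) + 4 * u / (s + (1 + y) ^ 2) := by
  field_simp
  ring

lemma one_le_potential {p N s y : ℝ} (hp : 1 < p) (hpN : p < N) (hs : 0 ≤ s) (hy : 0 < y) :
    1 ≤ (1 + ((s + (1 - y) ^ 2) / (s + (1 + y) ^ 2)) ^ ((N - 1) / (p - 1))
          - 2 * ((s + (1 - y) ^ 2) / (s + (1 + y) ^ 2)) ^ ((N - p) / (2 * (p - 1)))
            * (s + (1 + y) ^ 2)⁻¹ * (s + y ^ 2 - 1))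
        / (1 - ((s + (1 - y) ^ 2) / (s + (1 + y) ^ 2)) ^ ((N - p) / (2 * (p - 1)))) ^ 2 := by
  have hB : 0 < s + (1 + y) ^ 2 := by positivity
  have hX0 : 0 ≤ (s + (1 - y) ^ 2) / (s + (1 + y) ^ 2) := by positivity
  have hX1 : (s + (1 - y) ^ 2) / (s + (1 + y) ^ 2) < 1 := (div_lt_one hB).2 (by nlinarith)
  set X := (s + (1 - y) ^ 2) / (s + (1 + y) ^ 2)
  set a := (N - p) / (2 * (p - 1))
  have ha : 0 < a := div_pos (by linarith) (by linarith)
  have hexp : (N - 1) / (p - 1) = 2 * a + 1 := by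
    have : p - 1 ≠ 0 := by linarith
    simp only [a]
    field_simp
    ring
  have hu0 : 0 ≤ X ^ a := rpow_nonneg hX0 a
  have hu1 : X ^ a < 1 := rpow_lt_one hX0 hX1 ha
  rw [hexp, rpow_two_mul_add_one hX0 ha, one_add_sq_mul_sub_eq hB.ne',
    one_le_div (pow_pos (sub_pos.2 hu1) 2)]
  exact sq_one_sub_le_mul_one_sub_mul_add hu0 hu1.le hX1.le (by positivity)

theorem stmt10_general {m : ℕ} (p : ℝ) (hp2 : 2 ≤ p) (hpN : p < (m + 1 : ℝ))
    (x : EuclideanSpace ℝ (Fin m)) (y : ℝ) (hy : 0 < y) :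
    1 ≤ (1 + ((‖x‖ ^ 2 + (1 - y) ^ 2) / (‖x‖ ^ 2 + (1 + y) ^ 2)) ^ (((m + 1 : ℝ) - 1) / (p - 1))
          - 2 * ((‖x‖ ^ 2 + (1 - y) ^ 2) / (‖x‖ ^ 2 + (1 + y) ^ 2))
              ^ (((m + 1 : ℝ) - p) / (2 * (p - 1)))
            * (‖x‖ ^ 2 + (1 + y) ^ 2)⁻¹ * (‖x‖ ^ 2 + y ^ 2 - 1))
        / (1 - ((‖x‖ ^ 2 + (1 - y) ^ 2) / (‖x‖ ^ 2 + (1 + y) ^ 2))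
              ^ (((m + 1 : ℝ) - p) / (2 * (p - 1)))) ^ 2 :=
  one_le_potential (by linarith) hpN (by positivity) hy

/-- For `2 ≤ p < N`, `(x,y)` in the half-space with `(x,y) ≠ (0,1)`, the potential
`V_p(x,y) = [1 + X^{(N−1)/(p−1)} − 2X^{(N−p)/(2(p−1))}(|x|²+(1+y)²)^{−1}(|x|²+y²−1)]
/ [1 − X^{(N−p)/(2(p−1))}]²`, with `X = (|x|²+(1−y)²)/(|x|²+(1+y)²)`, satisfies
`V_p ≥ 1`.  (Here `N = m + 1`.) -/
theorem stmt10 {m : ℕ} (hm : 1 ≤ m) (p : ℝ) (hp2 : 2 ≤ p) (hpN : p < (m + 1 : ℝ))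
    (x : EuclideanSpace ℝ (Fin m)) (y : ℝ) (hy : 0 < y) (hxy : ¬(x = 0 ∧ y = 1)) :
    1 ≤ (1 + ((‖x‖ ^ 2 + (1 - y) ^ 2) / (‖x‖ ^ 2 + (1 + y) ^ 2)) ^ (((m + 1 : ℝ) - 1) / (p - 1))
          - 2 * ((‖x‖ ^ 2 + (1 - y) ^ 2) / (‖x‖ ^ 2 + (1 + y) ^ 2))
              ^ (((m + 1 : ℝ) - p) / (2 * (p - 1)))
            * (‖x‖ ^ 2 + (1 + y) ^ 2)⁻¹ * (‖x‖ ^ 2 + y ^ 2 - 1))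
        / (1 - ((‖x‖ ^ 2 + (1 - y) ^ 2) / (‖x‖ ^ 2 + (1 + y) ^ 2))
              ^ (((m + 1 : ℝ) - p) / (2 * (p - 1)))) ^ 2 :=
  stmt10_general p hp2 hpN x y hy
end

section
/- Let N ≥ 2. There is no measurable function g : ℝ^N → (0,∞) and exponent q ∈ [1,∞) and constant C > 0 such that C (∫_{ℝ^N} |u|^q g(x) dx)^{N/q} ≤ ∫_{ℝ^N} |∇u|^N dx holds for all radially symmetric u ∈ C_c^1(ℝ^N). -/
/-!
The unit ball has zero conformal (`N`-)capacity. Let `ψ` be a smooth step from `0` to `1` with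
`|ψ'| ≤ M`. The smoothed truncated logarithms `u_L(x) = ψ(2 - log ‖x‖ / L)` are radial, equal to
`1` on `‖x‖ ≤ e^L`, vanish on `‖x‖ ≥ e^{2L}`, and have gradient at most `M / (L ‖x‖)` in between;
since `∫_{e^L ≤ ‖x‖ ≤ e^{2L}} ‖x‖^{-N} = N |B₁| L`, their energy is `O(L^{1-N}) → 0`, while the
left-hand side for `u_L` stays above `C (∫_{B₁} g)^{N/q} > 0`.
-/

open Real MeasureTheory Metric Set Filter Topology Module

section RadialIntegral

variable {E : Type*} [NormedAddCommGroup E] [NormedSpace ℝ E] [FiniteDimensional ℝ E]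
  [MeasurableSpace E] [BorelSpace E] [Nontrivial E] (μ : Measure E) [μ.IsAddHaarMeasure]

lemma pow_pred_smul_indicator_Icc_inv_pow {n : ℕ} (hn : n ≠ 0) {a : ℝ} (ha : 0 < a) (b r : ℝ) :
    r ^ (n - 1) • (Icc a b).indicator (fun r => (r ^ n)⁻¹) r
      = (Icc a b).indicator (fun r => r⁻¹) r := by
  by_cases hr : r ∈ Icc a b
  · have : r ≠ 0 := (ha.trans_le hr.1).ne'
    rw [indicator_of_mem hr, indicator_of_mem hr, smul_eq_mul, ← pow_sub_one_mul hn]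
    field_simp
  · simp [hr]

lemma integrable_indicator_Icc_inv_pow_norm {a : ℝ} (ha : 0 < a) (b : ℝ) :
    Integrable (fun x : E => (Icc a b).indicator (fun r => (r ^ finrank ℝ E)⁻¹) ‖x‖) μ := by
  rw [integrable_fun_norm_addHaar μ (f := (Icc a b).indicator fun r => (r ^ finrank ℝ E)⁻¹)]
  simp_rw [pow_pred_smul_indicator_Icc_inv_pow finrank_pos.ne' ha]
  refine ((integrable_indicator_iff measurableSet_Icc).2 ?_).integrableOn
  exact (continuousOn_inv₀.mono fun r hr => (ha.trans_le hr.1).ne').integrableOn_compact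
    isCompact_Icc

lemma integral_indicator_Icc_inv_pow_norm {a b : ℝ} (ha : 0 < a) (hab : a ≤ b) :
    ∫ x, (Icc a b).indicator (fun r => (r ^ finrank ℝ E)⁻¹) ‖x‖ ∂μ
      = finrank ℝ E * μ.real (ball 0 1) * log (b / a) := by
  rw [integral_fun_norm_addHaar μ]
  simp_rw [pow_pred_smul_indicator_Icc_inv_pow finrank_pos.ne' ha]
  rw [integral_indicator measurableSet_Icc, Measure.restrict_restrict measurableSet_Icc,
    inter_eq_self_of_subset_left fun r (hr : r ∈ Icc a b) => mem_Ioi.2 (ha.trans_le hr.1),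
    integral_Icc_eq_integral_Ioc,
    ← intervalIntegral.integral_of_le hab, integral_inv_of_pos ha (ha.trans_le hab),
    nsmul_eq_mul, smul_eq_mul, mul_assoc]

end RadialIntegral

lemma Real.smoothTransition.exists_abs_deriv_le : ∃ M, ∀ t, |deriv smoothTransition t| ≤ M := by
  have hsupp : HasCompactSupport (deriv smoothTransition) := by
    refine HasCompactSupport.intro (isCompact_Icc (a := 0) (b := 1)) fun t ht => ?_
    rcases not_and_or.1 ht with ht | ht
    · have : smoothTransition =ᶠ[𝓝 t] fun _ => 0 :=
        (eventually_lt_nhds (not_le.1 ht)).mono fun s hs => smoothTransition.zero_of_nonpos hs.le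
      simp [this.deriv_eq]
    · have : smoothTransition =ᶠ[𝓝 t] fun _ => 1 :=
        (eventually_gt_nhds (not_le.1 ht)).mono fun s hs => smoothTransition.one_of_one_le hs.le
      simp [this.deriv_eq]
  exact hsupp.exists_bound_of_continuous
    (smoothTransition.contDiff (n := 1).continuous_deriv le_rfl)

section LogCutoff

variable {E : Type*} [NormedAddCommGroup E] {L : ℝ} {x : E}

/-- `2 - log ‖x‖ / L = log (e^{2L} / ‖x‖) / log e^L` is the truncated logarithm of the annulus
`e^L ≤ ‖x‖ ≤ e^{2L}`, smoothed by `smoothTransition`. The junk value `log 0 = 0` agrees with the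
plateau value `1` near the origin. -/
noncomputable def logCutoff (L : ℝ) (x : E) : ℝ := smoothTransition (2 - log ‖x‖ / L)

lemma logCutoff_eq_one (hL : 0 < L) (hx : ‖x‖ ≤ exp L) : logCutoff L x = 1 := by
  have hlog : log ‖x‖ ≤ L := by
    rcases (norm_nonneg x).eq_or_lt with h | h
    · rw [← h, log_zero]; exact hL.le
    · exact (log_le_iff_le_exp h).2 hx
  apply smoothTransition.one_of_one_le
  linarith [div_le_one_of_le₀ hlog hL.le]

lemma logCutoff_eq_zero (hL : 0 < L) (hx : exp (2 * L) ≤ ‖x‖) : logCutoff L x = 0 := by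
  have hlog : 2 * L ≤ log ‖x‖ := (le_log_iff_exp_le ((exp_pos _).trans_le hx)).2 hx
  apply smoothTransition.zero_of_nonpos
  rw [sub_nonpos, le_div_iff₀ hL]
  linarith

lemma logCutoff_eventuallyEq_one (hL : 0 < L) (hx : ‖x‖ < exp L) :
    logCutoff L =ᶠ[𝓝 x] fun _ => 1 :=
  (continuous_norm.continuousAt.eventually_lt continuousAt_const hx).mono fun _ hy =>
    logCutoff_eq_one hL hy.le

lemma logCutoff_eventuallyEq_zero (hL : 0 < L) (hx : exp (2 * L) < ‖x‖) :
    logCutoff L =ᶠ[𝓝 x] fun _ => 0 :=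
  (continuousAt_const.eventually_lt continuous_norm.continuousAt hx).mono fun _ hy =>
    logCutoff_eq_zero hL hy.le

lemma hasCompactSupport_logCutoff [NormedSpace ℝ E] [FiniteDimensional ℝ E] (hL : 0 < L) :
    HasCompactSupport (logCutoff L : E → ℝ) :=
  HasCompactSupport.intro (isCompact_closedBall 0 (exp (2 * L))) fun x hx =>
    logCutoff_eq_zero hL (not_le.1 (by simpa using hx)).le

variable [InnerProductSpace ℝ E]

lemma contDiff_logCutoff (hL : 0 < L) {n : ℕ∞} : ContDiff ℝ n (logCutoff L : E → ℝ) := by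
  refine contDiff_iff_contDiffAt.2 fun x => ?_
  rcases lt_or_ge ‖x‖ (exp L) with hx | hx
  · exact contDiffAt_const.congr_of_eventuallyEq (logCutoff_eventuallyEq_one hL hx)
  · have hx0 : x ≠ 0 := norm_pos_iff.1 ((exp_pos L).trans_le hx)
    exact smoothTransition.contDiffAt.comp x <| contDiffAt_const.sub <|
      ((contDiffAt_log.2 (norm_ne_zero_iff.2 hx0)).comp x (contDiffAt_norm ℝ hx0)).div_const L

lemma norm_fderiv_logCutoff_le {M : ℝ} (hL : 0 < L) (hM : ∀ t, |deriv smoothTransition t| ≤ M)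
    (hx : x ≠ 0) : ‖fderiv ℝ (logCutoff L) x‖ ≤ M / (L * ‖x‖) := by
  have hnorm : HasFDerivAt (fun y : E => ‖y‖) (fderiv ℝ (fun y : E => ‖y‖) x) x :=
    ((contDiffAt_norm ℝ hx).differentiableAt one_ne_zero).hasFDerivAt
  have hD : ‖fderiv ℝ (fun y : E => ‖y‖) x‖ ≤ 1 := by
    simpa using norm_fderiv_le_of_lipschitz ℝ (lipschitzWith_one_norm (E := E)) (x₀ := x)
  have hψ : HasDerivAt (fun s => smoothTransition (2 - s / L))
      (deriv smoothTransition (2 - log ‖x‖ / L) * -(1 / L)) (log ‖x‖) :=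
    ((smoothTransition.contDiff (n := 1)).differentiable one_ne_zero _).hasDerivAt.comp _
      (HasDerivAt.const_sub 2 ((hasDerivAt_id _).div_const L))
  change ‖fderiv ℝ ((fun s => smoothTransition (2 - s / L)) ∘ fun y : E => log ‖y‖) x‖ ≤ _
  rw [(hψ.comp_hasFDerivAt x (hnorm.log (norm_ne_zero_iff.2 hx))).fderiv, norm_smul, norm_smul,
    norm_mul, norm_neg, norm_inv, norm_norm, Real.norm_eq_abs, Real.norm_eq_abs, abs_one_div,
    abs_of_pos hL]
  calc |deriv smoothTransition (2 - log ‖x‖ / L)| * (1 / L) * (‖x‖⁻¹ * ‖fderiv ℝ (‖·‖) x‖)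
      ≤ M * (1 / L) * (‖x‖⁻¹ * 1) := by
        gcongr
        · exact mul_nonneg ((abs_nonneg _).trans (hM 0)) (by positivity)
        · exact hM _
    _ = M / (L * ‖x‖) := by field_simp

lemma norm_fderiv_logCutoff_pow_le {M : ℝ} (hL : 0 < L)
    (hM : ∀ t, |deriv smoothTransition t| ≤ M) {n : ℕ} (hn : n ≠ 0) (x : E) :
    ‖fderiv ℝ (logCutoff L) x‖ ^ n
      ≤ (M / L) ^ n * (Icc (exp L) (exp (2 * L))).indicator (fun r => (r ^ n)⁻¹) ‖x‖ := by
  by_cases hx : ‖x‖ ∈ Icc (exp L) (exp (2 * L))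
  · have hx0 : 0 < ‖x‖ := (exp_pos L).trans_le hx.1
    rw [indicator_of_mem hx, ← div_eq_mul_inv, ← div_pow, div_div]
    gcongr
    exact norm_fderiv_logCutoff_le hL hM (norm_pos_iff.1 hx0)
  · have hconst : ∃ c, logCutoff L =ᶠ[𝓝 x] fun _ => c := by
      rcases not_and_or.1 hx with hx | hx
      · exact ⟨1, logCutoff_eventuallyEq_one hL (not_le.1 hx)⟩
      · exact ⟨0, logCutoff_eventuallyEq_zero hL (not_le.1 hx)⟩
    obtain ⟨c, hc⟩ := hconst
    rw [hc.fderiv_eq, fderiv_const_apply, norm_zero, zero_pow hn, indicator_of_notMem hx,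
      mul_zero]

variable [FiniteDimensional ℝ E] [MeasurableSpace E] [BorelSpace E]
  (μ : Measure E) [μ.IsAddHaarMeasure]

lemma integral_norm_fderiv_logCutoff_pow_le [Nontrivial E] {M : ℝ} (hL : 0 < L)
    (hM : ∀ t, |deriv smoothTransition t| ≤ M) :
    ∫ x, ‖fderiv ℝ (logCutoff L) x‖ ^ finrank ℝ E ∂μ
      ≤ finrank ℝ E * μ.real (ball 0 1) * M ^ finrank ℝ E / L ^ (finrank ℝ E - 1) := by
  set n := finrank ℝ E
  have hn : n ≠ 0 := finrank_pos.ne'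
  calc ∫ x, ‖fderiv ℝ (logCutoff L) x‖ ^ n ∂μ
      ≤ ∫ x, (M / L) ^ n * (Icc (exp L) (exp (2 * L))).indicator (fun r => (r ^ n)⁻¹) ‖x‖ ∂μ :=
        integral_mono_of_nonneg (ae_of_all _ fun _ => by positivity)
          ((integrable_indicator_Icc_inv_pow_norm μ (exp_pos L) _).const_mul _)
          (ae_of_all _ (norm_fderiv_logCutoff_pow_le hL hM hn))
    _ = (M / L) ^ n * (n * μ.real (ball 0 1) * L) := by
        rw [integral_const_mul, integral_indicator_Icc_inv_pow_norm μ (exp_pos L)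
          (exp_le_exp.2 (by linarith)), ← exp_sub, log_exp, two_mul, add_sub_cancel_right]
    _ = n * μ.real (ball 0 1) * M ^ n / L ^ (n - 1) := by
        rw [div_pow, ← pow_sub_one_mul hn L]
        field_simp

theorem tendsto_integral_norm_fderiv_logCutoff_pow (hE : 2 ≤ finrank ℝ E) :
    Tendsto (fun L => ∫ x, ‖fderiv ℝ (logCutoff L) x‖ ^ finrank ℝ E ∂μ) atTop (𝓝 0) := by
  have : Nontrivial E := Module.nontrivial_of_finrank_pos (R := ℝ) (by omega)
  obtain ⟨M, hM⟩ := smoothTransition.exists_abs_deriv_le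
  have hbound : Tendsto (fun L : ℝ => finrank ℝ E * μ.real (ball 0 1) * M ^ finrank ℝ E
      / L ^ (finrank ℝ E - 1)) atTop (𝓝 0) :=
    tendsto_const_nhds.div_atTop (tendsto_pow_atTop (by omega))
  exact tendsto_of_tendsto_of_tendsto_of_le_of_le' tendsto_const_nhds hbound
    (Eventually.of_forall fun L => integral_nonneg fun x => by positivity)
    ((eventually_gt_atTop 0).mono fun L hL => integral_norm_fderiv_logCutoff_pow_le μ hL hM)

end LogCutoff

lemma setIntegral_le_integral_abs_rpow_mul {X : Type*} [TopologicalSpace X] [T2Space X]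
    [MeasurableSpace X] [OpensMeasurableSpace X] {μ : Measure X} {g u : X → ℝ}
    (hg : LocallyIntegrable g μ) (hg0 : ∀ x, 0 ≤ g x) (hu : Continuous u)
    (hu' : HasCompactSupport u) {q : ℝ} (hq : 0 < q) {s : Set X} (hs : MeasurableSet s)
    (hus : EqOn u 1 s) :
    ∫ x in s, g x ∂μ ≤ ∫ x, |u x| ^ q * g x ∂μ := by
  have hint : Integrable (fun x => |u x| ^ q * g x) μ :=
    hg.integrable_smul_left_of_hasCompactSupport (hu.abs.rpow_const fun _ => Or.inr hq.le)
      (hu'.comp_left (g := fun t => |t| ^ q) (by simp [zero_rpow hq.ne']))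
  calc ∫ x in s, g x ∂μ = ∫ x in s, |u x| ^ q * g x ∂μ :=
        setIntegral_congr_fun hs fun x hx => by simp [hus hx]
    _ ≤ ∫ x, |u x| ^ q * g x ∂μ :=
        setIntegral_le_integral hint (ae_of_all _ fun x => mul_nonneg (by positivity) (hg0 x))

/-- The radial critical Sobolev space on `ℝ^N` cannot be embedded into any weighted
Lebesgue space: there is no positive (measurable, locally integrable) weight `g`,
exponent `q ∈ [1, ∞)`, and constant `C > 0` such that
`C (∫ |u|^q g)^{N/q} ≤ ∫ |∇u|^N` for all radially symmetric `u ∈ C_c^1(ℝ^N)`. -/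
theorem stmt16 {N : ℕ} (hN : 2 ≤ N) :
    ¬ ∃ (g : EuclideanSpace ℝ (Fin N) → ℝ) (q C : ℝ),
        Measurable g ∧ (∀ x, 0 < g x) ∧ LocallyIntegrable g volume ∧
        1 ≤ q ∧ 0 < C ∧
        ∀ u : EuclideanSpace ℝ (Fin N) → ℝ,
          ContDiff ℝ 1 u → HasCompactSupport u →
          (∃ w : ℝ → ℝ, ∀ x, u x = w ‖x‖) →
          C * (∫ x, |u x| ^ q * g x) ^ ((N : ℝ) / q)
            ≤ ∫ x, ‖fderiv ℝ u x‖ ^ N := by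
  rintro ⟨g, q, C, -, hg_pos, hg_loc, hq, hC, H⟩
  set I := ∫ x in closedBall (0 : EuclideanSpace ℝ (Fin N)) 1, g x
  have hI : 0 < I := by
    refine (setIntegral_pos_iff_support_of_nonneg_ae (ae_of_all _ fun x => (hg_pos x).le)
      (hg_loc.integrableOn_isCompact (isCompact_closedBall 0 1))).2 ?_
    rw [Function.support_eq_univ fun x => (hg_pos x).ne', univ_inter]
    exact measure_closedBall_pos volume 0 one_pos
  have hlower : ∀ L > 0, C * I ^ ((N : ℝ) / q) ≤ ∫ x, ‖fderiv ℝ (logCutoff L) x‖ ^ N :=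
    fun L hL => (H _ (contDiff_logCutoff hL) (hasCompactSupport_logCutoff hL)
      ⟨fun r => smoothTransition (2 - log r / L), fun _ => rfl⟩).trans' <| by
        gcongr
        refine setIntegral_le_integral_abs_rpow_mul hg_loc (fun x => (hg_pos x).le)
          (contDiff_logCutoff hL (n := 0)).continuous (hasCompactSupport_logCutoff hL)
          (by linarith) measurableSet_closedBall fun x hx => logCutoff_eq_one hL ?_
        exact (mem_closedBall_zero_iff.1 hx).trans (one_le_exp hL.le)
  have henergy := tendsto_integral_norm_fderiv_logCutoff_pow
    (E := EuclideanSpace ℝ (Fin N)) volume (by simpa using hN)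
  rw [finrank_euclideanSpace_fin] at henergy
  obtain ⟨L, hL, hsmall⟩ := ((eventually_gt_atTop 0).and
    (henergy.eventually (gt_mem_nhds (by positivity : 0 < C * I ^ ((N : ℝ) / q))))).exists
  exact (hlower L hL).not_gt hsmall
end
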